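/- Given a G-equivariant one-step method Ψ_h: TQ → TQ (Ψ_h ∘ TΦ_g = TΦ_g ∘ Ψ_h for all g ∈ G) and a G-invariant Lagrangian L: TQ → ℝ, the shooting-based discrete Lagrangian L_d(q_0, q_1) = h∑_{i=0}^n b_i L(q^i, v^i), defined via the boundary-value sequence (q^{i+1}, v^{i+1}) = Ψ_{(c_{i+1}−c_i)h}(q^i, v^i), q^0 = q_0, q^n = q_1, is G-invariant: L_d(g·q_0, g·q_1) = L_d(q_0, q_1). -/

import Mathlib

open Finset

/-- The shooting boundary-value sequence on `TQ = P × V`: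
`(qⁱ⁺¹,vⁱ⁺¹) = Ψ_{(cᵢ₊₁−cᵢ)h}(qⁱ,vⁱ)` with `q⁰ = q₀` and `qⁿ = q₁`. -/
def IsShootingSeq {P V : Type*} (n : ℕ) (Ψ : ℝ → P × V → P × V) (c : ℕ → ℝ)
    (h : ℝ) (q0 q1 : P) (s : ℕ → P × V) : Prop :=
  (∀ i < n, s (i + 1) = Ψ ((c (i + 1) - c i) * h) (s i)) ∧
    (s 0).1 = q0 ∧ (s n).1 = q1

theorem IsShootingSeq.smul {G P V : Type*} [SMul G P] [SMul G V] {n : ℕ}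
    {Ψ : ℝ → P × V → P × V} {c : ℕ → ℝ} {h : ℝ} {q0 q1 : P} {s : ℕ → P × V} (g : G)
    (hΨ : ∀ t x, Ψ t (g • x) = g • Ψ t x) (hs : IsShootingSeq n Ψ c h q0 q1 s) :
    IsShootingSeq n Ψ c h (g • q0) (g • q1) (g • s) := by
  obtain ⟨hstep, h0, h1⟩ := hs
  refine ⟨fun i hi => ?_, by simp [h0], by simp [h1]⟩
  simp only [Pi.smul_apply, hstep i hi, hΨ]

theorem weighted_sum_smul_eq {G X : Type*} [SMul G X] (m : ℕ) (b : ℕ → ℝ) (L : X → ℝ)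
    (g : G) (hL : ∀ x, L (g • x) = L x) (s : ℕ → X) :
    ∑ i ∈ range m, b i * L ((g • s) i) = ∑ i ∈ range m, b i * L (s i) := by
  simp only [Pi.smul_apply, hL]

/-- Given a `G`-equivariant one-step method `Ψ_h : TQ → TQ`
(`Ψ_h ∘ TΦ_g = TΦ_g ∘ Ψ_h`, with `TΦ_g(q,v) = (g•q, g•v)`) and a `G`-invariant
Lagrangian `L : TQ → ℝ`, the shooting-based discrete Lagrangian
`L_d(q₀,q₁) = h ∑ᵢ bᵢ L(qⁱ,vⁱ)` is `G`-invariant: `L_d(g•q₀, g•q₁) = L_d(q₀,q₁)`. -/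
theorem shooting_discrete_lagrangian_G_invariant
    {G P V : Type*} [Group G] [MulAction G P] [MulAction G V]
    (n : ℕ) (Ψ : ℝ → P × V → P × V)
    (hequiv : ∀ (t : ℝ) (g : G) (x : P × V),
      Ψ t (g • x.1, g • x.2) = (g • (Ψ t x).1, g • (Ψ t x).2))
    (c b : ℕ → ℝ) (h : ℝ)
    (L : P × V → ℝ)
    (hLinv : ∀ (g : G) (q : P) (v : V), L (g • q, g • v) = L (q, v))
    (Ld : P → P → ℝ)
    (hLd : ∀ (q0 q1 : P) (s : ℕ → P × V),
      IsShootingSeq n Ψ c h q0 q1 s →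
      Ld q0 q1 = h * ∑ i ∈ Finset.range (n + 1), b i * L (s i))
    (g : G) (q0 q1 : P)
    (hex : ∃ s : ℕ → P × V, IsShootingSeq n Ψ c h q0 q1 s) :
    Ld (g • q0) (g • q1) = Ld q0 q1 := by
  obtain ⟨s, hs⟩ := hex
  have hgs : IsShootingSeq n Ψ c h (g • q0) (g • q1) (g • s) :=
    hs.smul g fun t x => hequiv t g x
  rw [hLd _ _ _ hgs, hLd _ _ _ hs, weighted_sum_smul_eq _ b L g fun x => hLinv g x.1 x.2]
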